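/- arXiv:math/0104167 — 2 statements merged into one kernel-verified Lean document; each statement's English description precedes it below -/
import Mathlib

section
/- Let c be an element of H_ℚ ⊗̂_{R_ℚ} H_ℚ that is symmetric, i.e. τ(c) = c where τ is the flip of the two tensor factors. If c satisfies (i) (id ⊗ Δ)c + 1⊗c − (Δ ⊗ id)c − c⊗1 = 0 in H_ℚ ⊗ H_ℚ ⊗ H_ℚ and (ii) (id ⊗ ε)c = 0 = (ε ⊗ id)c, then the symmetric series c + x⊗1 + 1⊗x is a commutative formal group over the Hopf algebra H_ℚ (it satisfies the unit, associativity and commutativity axioms). -/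
open scoped TensorProduct

noncomputable section

namespace FGHopf

variable {A B : Type*} [CommRing A] [CommRing B] {σ : Type*}

/-- Apply a map to all coefficients of a (multivariate) power series. -/
def mapCoeffs (f : A → B) (F : MvPowerSeries σ A) : MvPowerSeries σ B :=
  fun m => f (F m)

/-- Substitution of two power series `G`, `K` into a two-variable power series `w`
(the mathematically correct substitution whenever the relevant family of coefficients
is finitely supported, e.g. when `G` and `K` have zero constant term or `w` is a
polynomial). -/
def subst2 (w : MvPowerSeries (Fin 2) A) (G K : MvPowerSeries σ A) :
    MvPowerSeries σ A :=
  fun m => ∑ᶠ p : ℕ × ℕ,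
    MvPowerSeries.coeff (R := A) (Finsupp.single 0 p.1 + Finsupp.single 1 p.2) w *
      MvPowerSeries.coeff (R := A) m (G ^ p.1 * K ^ p.2)

/-- Substitution of a power series `G` into a one-variable power series `w`. -/
def subst1 (w : PowerSeries A) (G : MvPowerSeries σ A) : MvPowerSeries σ A :=
  fun m => ∑ᶠ n : ℕ, PowerSeries.coeff (R := A) n w * MvPowerSeries.coeff (R := A) m (G ^ n)

/-- Regard a two-variable series as a three-variable series in the first two variables,
mapping its coefficients by `f`. -/
def emb12 (f : A → B) (F : MvPowerSeries (Fin 2) A) : MvPowerSeries (Fin 3) B :=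
  fun m => if m 2 = 0 then
    f (F (Finsupp.single 0 (m 0) + Finsupp.single 1 (m 1))) else 0

/-- Regard a two-variable series as a three-variable series in the last two variables,
mapping its coefficients by `f`. -/
def emb23 (f : A → B) (F : MvPowerSeries (Fin 2) A) : MvPowerSeries (Fin 3) B :=
  fun m => if m 0 = 0 then
    f (F (Finsupp.single 0 (m 1) + Finsupp.single 1 (m 2))) else 0

/-- Regard a one-variable series as a two-variable series in the first variable `x⊗1`,
mapping its coefficients by `f`. -/
def inVar0 (f : A → B) (g : PowerSeries A) : MvPowerSeries (Fin 2) B :=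
  fun m => if m 1 = 0 then f (PowerSeries.coeff (R := A) (m 0) g) else 0

/-- Regard a one-variable series as a two-variable series in the second variable `1⊗x`,
mapping its coefficients by `f`. -/
def inVar1 (f : A → B) (g : PowerSeries A) : MvPowerSeries (Fin 2) B :=
  fun m => if m 0 = 0 then f (PowerSeries.coeff (R := A) (m 1) g) else 0

/-- Formal partial derivative of a multivariate power series with respect to the `i`-th
variable. -/
def pderiv (i : σ) (F : MvPowerSeries σ A) : MvPowerSeries σ A :=
  fun m => ((m i + 1 : ℕ) : A) * F (m + Finsupp.single i 1)

variable (R : Type*) [CommRing R] (H : Type*) [CommRing H] [HopfAlgebra R H]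

/-- `id ⊗ ε : H ⊗ H → H`. -/
def idCounit : H ⊗[R] H →ₗ[R] H :=
  (TensorProduct.rid R H).toLinearMap ∘ₗ
    LinearMap.lTensor H (Coalgebra.counit (R := R) (A := H))

/-- `ε ⊗ id : H ⊗ H → H`. -/
def counitId : H ⊗[R] H →ₗ[R] H :=
  (TensorProduct.lid R H).toLinearMap ∘ₗ
    LinearMap.rTensor H (Coalgebra.counit (R := R) (A := H))

/-- `Δ ⊗ id : H ⊗ H → H ⊗ H ⊗ H` (with the rightmost association). -/
def comulLeftTensor : H ⊗[R] H →ₗ[R] H ⊗[R] (H ⊗[R] H) :=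
  (TensorProduct.assoc R H H H).toLinearMap ∘ₗ
    LinearMap.rTensor H (Coalgebra.comul (R := R) (A := H))

/-- `id ⊗ Δ : H ⊗ H → H ⊗ H ⊗ H`. -/
def idTensorComul : H ⊗[R] H →ₗ[R] H ⊗[R] (H ⊗[R] H) :=
  LinearMap.lTensor H (Coalgebra.comul (R := R) (A := H))

/-- `a ↦ a ⊗ 1 : H ⊗ H → H ⊗ H ⊗ H`. -/
def incl12 : H ⊗[R] H →ₗ[R] H ⊗[R] (H ⊗[R] H) :=
  LinearMap.lTensor H ((TensorProduct.mk R H H).flip 1)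

/-- `a ↦ 1 ⊗ a : H ⊗ H → H ⊗ H ⊗ H`. -/
def incl23 : H ⊗[R] H →ₗ[R] H ⊗[R] (H ⊗[R] H) :=
  TensorProduct.mk R H (H ⊗[R] H) 1

/-- The flip `τ` of the two tensor factors of `H ⊗ H`. -/
def tau : H ⊗[R] H →ₗ[R] H ⊗[R] H := (TensorProduct.comm R H H).toLinearMap

/-- The unit axiom for a formal group `F` over the Hopf algebra `H`: applying `id ⊗ ε`
to all coefficients and setting the second variable to `0` yields the series `x`, and
symmetrically. -/
def UnitAxiom (F : MvPowerSeries (Fin 2) (H ⊗[R] H)) : Prop :=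
  (∀ n : ℕ, idCounit R H (F (Finsupp.single 0 n)) = if n = 1 then 1 else 0) ∧
  (∀ n : ℕ, counitId R H (F (Finsupp.single 1 n)) = if n = 1 then 1 else 0)

/-- The associativity axiom for a formal group `F` over the Hopf algebra `H`:
`((Δ ⊗ id)F)(F(x⊗1,1⊗x) ⊗ 1, 1⊗1⊗x) = ((id ⊗ Δ)F)(x⊗1⊗1, 1 ⊗ F(x⊗1,1⊗x))`. -/
def AssocAxiom (F : MvPowerSeries (Fin 2) (H ⊗[R] H)) : Prop :=
  subst2 (mapCoeffs (comulLeftTensor R H) F) (emb12 (incl12 R H) F)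
      (MvPowerSeries.X 2) =
  subst2 (mapCoeffs (idTensorComul R H) F) (MvPowerSeries.X 0)
      (emb23 (incl23 R H) F)

/-- The commutativity axiom: `F` is symmetric, `A_{i,j} = τ(A_{j,i})`. -/
def CommAxiom (F : MvPowerSeries (Fin 2) (H ⊗[R] H)) : Prop :=
  ∀ m : Fin 2 →₀ ℕ,
    F m = tau R H (F (Finsupp.single 0 (m 1) + Finsupp.single 1 (m 0)))

/-- A commutative formal group over the Hopf algebra `H`: a two-variable power series
with coefficients in `H ⊗ H`, with zero constant term, satisfying the unit,
associativity and commutativity axioms. -/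
def IsCommFormalGroup (F : MvPowerSeries (Fin 2) (H ⊗[R] H)) : Prop :=
  F 0 = 0 ∧ UnitAxiom R H F ∧ AssocAxiom R H F ∧ CommAxiom R H F

/-!
The series `F = c + x⊗1 + 1⊗x` is linear in its variables, so substituting into it only adds
series: both sides of the associativity axiom are `x⊗1⊗1 + 1⊗x⊗1 + 1⊗1⊗x` plus a constant,
namely `(Δ ⊗ id)c + c⊗1` on the left and `(id ⊗ Δ)c + 1⊗c` on the right, and these agree by
the cocycle condition. Likewise the unit axiom reduces to `(id ⊗ ε)c = 0 = (ε ⊗ id)c` and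
commutativity to `τ(c) = c`.
-/

open MvPowerSeries

lemma fin2_single_add_single_eq_iff {a b : ℕ} {n : Fin 2 →₀ ℕ} :
    Finsupp.single 0 a + Finsupp.single 1 b = n ↔ a = n 0 ∧ b = n 1 := by
  simp [Finsupp.ext_iff, Fin.forall_fin_two, eq_comm]

lemma fin3_finsupp_ext_iff {m n : Fin 3 →₀ ℕ} :
    m = n ↔ m 0 = n 0 ∧ m 1 = n 1 ∧ m 2 = n 2 := by
  simp [Finsupp.ext_iff, Fin.forall_fin_succ]

lemma coeff_mapCoeffs (f : A → B) (P : MvPowerSeries σ A) (m : σ →₀ ℕ) :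
    coeff m (mapCoeffs f P) = f (coeff m P) := rfl

lemma coeff_emb12 (f : A → B) (P : MvPowerSeries (Fin 2) A) (m : Fin 3 →₀ ℕ) :
    coeff m (emb12 f P) =
      if m 2 = 0 then f (coeff (Finsupp.single 0 (m 0) + Finsupp.single 1 (m 1)) P) else 0 :=
  rfl

lemma coeff_emb23 (f : A → B) (P : MvPowerSeries (Fin 2) A) (m : Fin 3 →₀ ℕ) :
    coeff m (emb23 f P) =
      if m 0 = 0 then f (coeff (Finsupp.single 0 (m 1) + Finsupp.single 1 (m 2)) P) else 0 :=
  rfl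

section CoefficientMaps

variable {F : Type*} [FunLike F A B] [AddMonoidHomClass F A B]

lemma mapCoeffs_C_add_X_add_X (f : F) (hf : f 1 = 1) (a : A) (i j : σ) :
    mapCoeffs f (C a + X i + X j) = C (f a) + X i + X j := by
  classical
  ext m
  simp [coeff_mapCoeffs, coeff_C, coeff_X, apply_ite f, hf]

lemma emb12_C_add_X_add_X (f : F) (hf : f 1 = 1) (a : A) :
    emb12 f (C a + X 0 + X 1) = C (f a) + X 0 + X 1 := by
  ext m
  by_cases hm : m 2 = 0
  · simp [coeff_emb12, hm, coeff_C, coeff_X, apply_ite f, hf,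
      fin2_single_add_single_eq_iff, fin3_finsupp_ext_iff]
  · simp [coeff_emb12, hm, coeff_C, coeff_X, fin3_finsupp_ext_iff]

lemma emb23_C_add_X_add_X (f : F) (hf : f 1 = 1) (a : A) :
    emb23 f (C a + X 0 + X 1) = C (f a) + X 1 + X 2 := by
  ext m
  by_cases hm : m 0 = 0
  · simp [coeff_emb23, hm, coeff_C, coeff_X, apply_ite f, hf,
      fin2_single_add_single_eq_iff, fin3_finsupp_ext_iff]
  · simp [coeff_emb23, hm, coeff_C, coeff_X, fin3_finsupp_ext_iff]

end CoefficientMaps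

lemma subst2_C_add_X_add_X (a : A) (G K : MvPowerSeries σ A) :
    subst2 (C a + X 0 + X 1) G K = C a + G + K := by
  classical
  have hw : ∀ p : ℕ × ℕ,
      coeff (Finsupp.single 0 p.1 + Finsupp.single 1 p.2)
          (C a + X 0 + X 1 : MvPowerSeries (Fin 2) A) =
        (if p = (0, 0) then a else 0) + (if p = (1, 0) then 1 else 0) +
          (if p = (0, 1) then 1 else 0) := by
    rintro ⟨i, j⟩
    simp [coeff_C, coeff_X, fin2_single_add_single_eq_iff]
  ext m
  rw [coeff_apply, subst2, finsum_eq_sum_of_support_subset (s := {(0, 0), (1, 0), (0, 1)})]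
  · rw [Finset.sum_insert (by decide), Finset.sum_insert (by decide), Finset.sum_singleton,
      hw, hw, hw]
    simp [coeff_C, coeff_one, add_assoc]
  · intro p hp
    contrapose hp
    simp only [Finset.coe_insert, Finset.coe_singleton, Set.mem_insert_iff,
      Set.mem_singleton_iff, not_or] at hp
    simp [hw, hp]

lemma coeff_swap_C_add_X_add_X (a : A) (m : Fin 2 →₀ ℕ) :
    coeff (Finsupp.single 0 (m 1) + Finsupp.single 1 (m 0))
        (C a + X 0 + X 1 : MvPowerSeries (Fin 2) A) =
      coeff m (C a + X 0 + X 1) := by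
  simp only [map_add, coeff_C, coeff_X, Finsupp.ext_iff, Fin.forall_fin_two]
  simp [and_comm, add_right_comm]

section Hopf

lemma idCounit_one : idCounit R H 1 = 1 := by
  simp [idCounit, Algebra.TensorProduct.one_def]

lemma counitId_one : counitId R H 1 = 1 := by
  simp [counitId, Algebra.TensorProduct.one_def]

lemma comulLeftTensor_one : comulLeftTensor R H 1 = 1 := by
  simp [comulLeftTensor, Algebra.TensorProduct.one_def]

lemma idTensorComul_one : idTensorComul R H 1 = 1 := by
  simp [idTensorComul, Algebra.TensorProduct.one_def]

lemma incl12_one : incl12 R H 1 = 1 := by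
  simp [incl12, Algebra.TensorProduct.one_def]

lemma incl23_one : incl23 R H 1 = 1 := by
  simp [incl23, Algebra.TensorProduct.one_def]

lemma tau_one : tau R H 1 = 1 := by
  simp [tau, Algebra.TensorProduct.one_def]

variable {R H} {c : H ⊗[R] H}

lemma unitAxiom_C_add_X_add_X (h₁ : idCounit R H c = 0) (h₂ : counitId R H c = 0) :
    UnitAxiom R H (C c + X 0 + X 1) := by
  constructor <;> intro n
  · change coeff _ (mapCoeffs (idCounit R H) (C c + X 0 + X 1)) = _
    rw [mapCoeffs_C_add_X_add_X _ (idCounit_one R H), h₁]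
    simp [coeff_X, Finsupp.single_eq_single_iff]
  · change coeff _ (mapCoeffs (counitId R H) (C c + X 0 + X 1)) = _
    rw [mapCoeffs_C_add_X_add_X _ (counitId_one R H), h₂]
    simp [coeff_X, Finsupp.single_eq_single_iff]

lemma assocAxiom_C_add_X_add_X
    (h : idTensorComul R H c + incl23 R H c = comulLeftTensor R H c + incl12 R H c) :
    AssocAxiom R H (C c + X 0 + X 1) := by
  rw [AssocAxiom, mapCoeffs_C_add_X_add_X _ (comulLeftTensor_one R H),
    mapCoeffs_C_add_X_add_X _ (idTensorComul_one R H), emb12_C_add_X_add_X _ (incl12_one R H),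
    emb23_C_add_X_add_X _ (incl23_one R H), subst2_C_add_X_add_X, subst2_C_add_X_add_X]
  have hC := congrArg (C (σ := Fin 3)) h
  rw [map_add, map_add] at hC
  linear_combination -hC

lemma commAxiom_C_add_X_add_X (h : tau R H c = c) : CommAxiom R H (C c + X 0 + X 1) := by
  intro m
  change coeff m (C c + X 0 + X 1) =
    coeff (Finsupp.single (0 : Fin 2) (m 1) + Finsupp.single 1 (m 0))
      (mapCoeffs (tau R H) (C c + X 0 + X 1))
  rw [mapCoeffs_C_add_X_add_X _ (tau_one R H), h, coeff_swap_C_add_X_add_X]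

end Hopf

theorem stmt0_general
    (R : Type*)
    (Rq : Type*) [CommRing Rq]
    (Hq : Type*) [CommRing Hq] [HopfAlgebra Rq Hq]
    (c : Hq ⊗[Rq] Hq) (hsymm : tau Rq Hq c = c)
    (hcocycle : idTensorComul Rq Hq c + incl23 Rq Hq c
      - comulLeftTensor Rq Hq c - incl12 Rq Hq c = 0)
    (hcounit₁ : idCounit Rq Hq c = 0) (hcounit₂ : counitId Rq Hq c = 0) :
    UnitAxiom Rq Hq (MvPowerSeries.C (σ := Fin 2) (R := Hq ⊗[Rq] Hq) c
        + MvPowerSeries.X 0 + MvPowerSeries.X 1) ∧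
    AssocAxiom Rq Hq (MvPowerSeries.C (σ := Fin 2) (R := Hq ⊗[Rq] Hq) c
        + MvPowerSeries.X 0 + MvPowerSeries.X 1) ∧
    CommAxiom Rq Hq (MvPowerSeries.C (σ := Fin 2) (R := Hq ⊗[Rq] Hq) c
        + MvPowerSeries.X 0 + MvPowerSeries.X 1) := by
  refine ⟨unitAxiom_C_add_X_add_X hcounit₁ hcounit₂, assocAxiom_C_add_X_add_X ?_,
    commAxiom_C_add_X_add_X hsymm⟩
  rwa [sub_sub, sub_eq_zero] at hcocycle

/-- if the symmetric element `c` is a counit-normalized 2-cocycle in the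
cobar complex of `H_ℚ`, then `c + x⊗1 + 1⊗x` is a commutative formal group over the
Hopf algebra `H_ℚ` (unit, associativity and commutativity axioms). -/
theorem stmt0
    (R : Type*) [CommRing R] [NoZeroSMulDivisors ℤ R]
    (H : Type*) [CommRing H] [HopfAlgebra R H]
    (Rq : Type*) [CommRing Rq] [Algebra ℚ Rq]
    (Hq : Type*) [CommRing Hq] [HopfAlgebra Rq Hq] [Algebra ℚ Hq]
    [IsScalarTower ℚ Rq Hq]
    (ιR : R →+* Rq) (ι : H →+* Hq) (ιι : H ⊗[R] H →+* Hq ⊗[Rq] Hq)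
    (halg : ∀ r : R, ι (algebraMap R H r) = algebraMap Rq Hq (ιR r))
    (hιι : ∀ h k : H, ιι (h ⊗ₜ[R] k) = ι h ⊗ₜ[Rq] ι k)
    (hιε : ∀ h : H, Coalgebra.counit (R := Rq) (ι h) = ιR (Coalgebra.counit (R := R) h))
    (hιΔ : ∀ h : H, Coalgebra.comul (R := Rq) (ι h) = ιι (Coalgebra.comul (R := R) h))
    (c : Hq ⊗[Rq] Hq) (hsymm : tau Rq Hq c = c)
    (hcocycle : idTensorComul Rq Hq c + incl23 Rq Hq c
      - comulLeftTensor Rq Hq c - incl12 Rq Hq c = 0)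
    (hcounit₁ : idCounit Rq Hq c = 0) (hcounit₂ : counitId Rq Hq c = 0) :
    UnitAxiom Rq Hq (MvPowerSeries.C (σ := Fin 2) (R := Hq ⊗[Rq] Hq) c
        + MvPowerSeries.X 0 + MvPowerSeries.X 1) ∧
    AssocAxiom Rq Hq (MvPowerSeries.C (σ := Fin 2) (R := Hq ⊗[Rq] Hq) c
        + MvPowerSeries.X 0 + MvPowerSeries.X 1) ∧
    CommAxiom Rq Hq (MvPowerSeries.C (σ := Fin 2) (R := Hq ⊗[Rq] Hq) c
        + MvPowerSeries.X 0 + MvPowerSeries.X 1) :=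
  stmt0_general R Rq Hq c hsymm hcocycle hcounit₁ hcounit₂

end FGHopf
end
end

section
/- Let 𝔉(x,z) = Σ_{i,j≥0} A_{i,j} x^i z^j be a commutative formal group over H, regarded over H_ℚ, let ω̃(x) = Σ_{i≥0} ((id ⊗ ε)A_{i,1}) x^i, assume b_0 = (id ⊗ ε)A_{0,1} is invertible in H_ℚ, let 𝔤(x) = ∫_0^x dt/ω̃(t) ∈ H_ℚ[[x]] be the termwise formal antiderivative of 1/ω̃ with zero constant term, and let c ∈ H_ℚ ⊗̂_{R_ℚ} H_ℚ with (id ⊗ ε)c = 0 = (ε ⊗ id)c be such that (Δ𝔤)(𝔉(x⊗1,1⊗x)) = c + (𝔤⊗1)(x⊗1) + (1⊗𝔤)(1⊗x). Then 𝔤 has a compositional inverse 𝔤^{-1} ∈ H_ℚ[[x]] (its linear coefficient b_0 being invertible and its constant term zero), and 𝔉 is recovered by 𝔉(x⊗1, 1⊗x) = (Δ(𝔤^{-1}))(c + (𝔤⊗1)(x⊗1) + (1⊗𝔤)(1⊗x)), where Δ(𝔤^{-1}) denotes 𝔤^{-1} with Δ applied to all its coefficients, and the substitution is well defined since (ε⊗ε)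 applied to the constant term c of the argument is 0. -/
/-!
Because `𝔉` and `𝔤` have zero constant term, the hypothesis identifies the argument
`c + (𝔤⊗1)(x⊗1) + (1⊗𝔤)(1⊗x)` with the genuine substitution `(Δ𝔤)(𝔉)`. A power series with
invertible linear coefficient and zero constant term has a two-sided compositional inverse, and
applying the ring map `Δ` to `𝔤⁻¹ ∘ 𝔤 = X` gives `(Δ𝔤⁻¹) ∘ (Δ𝔤) = X`, hence
`(Δ𝔤⁻¹)((Δ𝔤)(𝔉)) = 𝔉`. Since the argument has zero constant term, the coefficient of a monomial
of total degree `d` in this substitution only involves its first `d + 1` powers, so the partial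
sums in the statement are already exact.
-/

open scoped TensorProduct

noncomputable section

namespace FGHopf

variable {A B : Type*} [CommRing A] [CommRing B] {σ : Type*}

variable (R : Type*) [CommRing R] (H : Type*) [CommRing H] [HopfAlgebra R H]

open PowerSeries

theorem subst1_eq_subst (w : PowerSeries A) {G : MvPowerSeries σ A} (hG : HasSubst G) :
    subst1 w G = w.subst G := by
  ext m
  rw [coeff_subst hG]
  rfl

theorem coeff_subst_eq_sum_range (w : PowerSeries A) {G : MvPowerSeries σ A}
    (hG : MvPowerSeries.constantCoeff G = 0) {m : σ →₀ ℕ} {N : ℕ} (hm : m.degree ≤ N) :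
    MvPowerSeries.coeff m (w.subst G) =
      ∑ n ∈ Finset.range (N + 1), coeff n w * MvPowerSeries.coeff m (G ^ n) := by
  rw [coeff_subst (.of_constantCoeff_zero hG)]
  refine finsum_eq_sum_of_support_subset _ fun n hn => ?_
  rw [Finset.coe_range, Set.mem_Iio]
  by_contra! hNn
  have hlt : (m.degree : ℕ∞) < (G ^ n).order :=
    lt_of_lt_of_le (by exact_mod_cast (by omega : m.degree < n))
      (MvPowerSeries.le_order_pow_of_constantCoeff_eq_zero n hG)
  exact hn (by simp only [MvPowerSeries.coeff_of_lt_order hlt, smul_zero])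

theorem constantCoeff_map_eq_zero (φ : A →+* B) {g : PowerSeries A} (hg : constantCoeff g = 0) :
    constantCoeff (g.map φ) = 0 := by
  rw [← coeff_zero_eq_constantCoeff_apply, coeff_map, coeff_zero_eq_constantCoeff_apply, hg,
    map_zero]

theorem subst_map_substInvOfIsUnit (φ : A →+* B) {g : PowerSeries A}
    (hg : constantCoeff g = 0) (hu : IsUnit (coeff 1 g)) {F : MvPowerSeries σ B}
    (hF : HasSubst F) :
    ((g.substInvOfIsUnit hu).map φ).subst ((g.map φ).subst F) = F := by
  have hgφ : HasSubst (g.map φ) := .of_constantCoeff_zero' (constantCoeff_map_eq_zero φ hg)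
  have hinv : ((g.substInvOfIsUnit hu).map φ).subst (g.map φ) = X := by
    have h := map_subst (h := φ) (.of_constantCoeff_zero' hg) (g.substInvOfIsUnit hu)
    rw [subst_substInvOfIsUnit_left _ hg] at h
    exact h.symm.trans (map_X φ)
  rw [← subst_comp_subst_apply hgφ hF, hinv, subst_X hF]

theorem mapCoeffs_comul_eq_map {k : Type*} [CommRing k] [Bialgebra k A] (f : PowerSeries A) :
    mapCoeffs (⇑(Coalgebra.comul (R := k) (A := A))) f =
      f.map (Bialgebra.comulAlgHom k A).toRingHom :=
  rfl

theorem stmt10_general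
    (R : Type*) [CommRing R]
    (H : Type*) [CommRing H] [HopfAlgebra R H]
    (Rq : Type*) [CommRing Rq]
    (Hq : Type*) [CommRing Hq] [HopfAlgebra Rq Hq] [Algebra ℚ Hq]
    (ιι : H ⊗[R] H →+* Hq ⊗[Rq] Hq)
    (F : MvPowerSeries (Fin 2) (H ⊗[R] H)) (hF : IsCommFormalGroup R H F)
    (Fq : MvPowerSeries (Fin 2) (Hq ⊗[Rq] Hq)) (hFq : Fq = mapCoeffs (⇑ιι) F)
    (w : PowerSeries Hq)
    (winv : PowerSeries Hq) (hwinv : winv * w = 1)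
    (g : PowerSeries Hq)
    (hg : g = PowerSeries.mk fun n =>
      if n = 0 then 0 else ((n : ℚ)⁻¹) • PowerSeries.coeff (R := Hq) (n - 1) winv)
    (c : Hq ⊗[Rq] Hq)
    (heq : subst1 (mapCoeffs (⇑(Coalgebra.comul (R := Rq) (A := Hq))) g) Fq =
      MvPowerSeries.C (σ := Fin 2) (R := Hq ⊗[Rq] Hq) c
        + inVar0 (fun b => b ⊗ₜ[Rq] (1 : Hq)) g
        + inVar1 (fun b => (1 : Hq) ⊗ₜ[Rq] b) g)
    (Garg : MvPowerSeries (Fin 2) (Hq ⊗[Rq] Hq))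
    (hGarg : Garg = MvPowerSeries.C (σ := Fin 2) (R := Hq ⊗[Rq] Hq) c
        + inVar0 (fun b => b ⊗ₜ[Rq] (1 : Hq)) g
        + inVar1 (fun b => (1 : Hq) ⊗ₜ[Rq] b) g)
    (εε : Hq ⊗[Rq] Hq →ₐ[Rq] Rq) :
    ∃ ginv : PowerSeries Hq,
      PowerSeries.coeff (R := Hq) 0 ginv = 0 ∧
      subst1 g ginv = (PowerSeries.X : PowerSeries Hq) ∧
      subst1 ginv g = (PowerSeries.X : PowerSeries Hq) ∧
      ∀ (k : ℕ) (m : Fin 2 →₀ ℕ),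
        MvPowerSeries.coeff (R := Hq ⊗[Rq] Hq) m Fq -
          ∑ n ∈ Finset.range (k + m 0 + m 1 + 1),
            PowerSeries.coeff (R := Hq ⊗[Rq] Hq) n
              (mapCoeffs (⇑(Coalgebra.comul (R := Rq) (A := Hq))) ginv) *
              MvPowerSeries.coeff (R := Hq ⊗[Rq] Hq) m (Garg ^ n)
          ∈ RingHom.ker εε.toRingHom ^ k := by
  have hg0 : constantCoeff g = 0 := by simp [hg]
  have hunit : IsUnit (coeff 1 g) := by
    have h := congrArg constantCoeff hwinv
    rw [map_mul, map_one] at h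
    simpa [hg] using IsUnit.of_mul_eq_one _ h
  have hFq0 : MvPowerSeries.constantCoeff Fq = 0 := by
    rw [hFq, ← MvPowerSeries.coeff_zero_eq_constantCoeff_apply]
    change ιι (F 0) = 0
    rw [hF.1, map_zero]
  have hGarg' : Garg = (g.map (Bialgebra.comulAlgHom Rq Hq).toRingHom).subst Fq := by
    rw [hGarg, ← heq, mapCoeffs_comul_eq_map, subst1_eq_subst _ (.of_constantCoeff_zero hFq0)]
  refine ⟨g.substInvOfIsUnit hunit, by simp, ?_, ?_, fun k m => ?_⟩
  · rw [subst1_eq_subst _ (.substInvOfIsUnit _ hunit), subst_substInvOfIsUnit_right _ hg0]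
  · rw [subst1_eq_subst _ (.of_constantCoeff_zero' hg0), subst_substInvOfIsUnit_left _ hg0]
  · have hGarg0 : MvPowerSeries.constantCoeff Garg = 0 := by
      rw [hGarg']
      exact constantCoeff_subst_eq_zero hFq0 _ (constantCoeff_map_eq_zero _ hg0)
    have hdeg : m.degree ≤ k + m 0 + m 1 := by
      rw [Finsupp.degree_eq_sum, Fin.sum_univ_two]
      omega
    rw [← coeff_subst_eq_sum_range _ hGarg0 hdeg, mapCoeffs_comul_eq_map, hGarg',
      subst_map_substInvOfIsUnit _ hg0 hunit (.of_constantCoeff_zero hFq0), sub_self]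
    exact zero_mem _

/-- `𝔤` has a compositional inverse `𝔤⁻¹ ∈ H_ℚ[[x]]`, and `𝔉` is
recovered as `𝔉(x⊗1,1⊗x) = (Δ(𝔤⁻¹))(c + (𝔤⊗1)(x⊗1) + (1⊗𝔤)(1⊗x))`, the substitution
being understood in the topology defined by the powers of the augmentation ideal
`ker(ε⊗ε)` (this is well defined since `(ε⊗ε)` applied to the constant term `c` of the
argument is `0`): modulo every power `ker(ε⊗ε)^k`, each coefficient of `𝔉` agrees with
the corresponding partial sum of the substituted series. -/
theorem stmt10
    (R : Type*) [CommRing R] [NoZeroSMulDivisors ℤ R]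
    (H : Type*) [CommRing H] [HopfAlgebra R H]
    (Rq : Type*) [CommRing Rq] [Algebra ℚ Rq]
    (Hq : Type*) [CommRing Hq] [HopfAlgebra Rq Hq] [Algebra ℚ Hq]
    [IsScalarTower ℚ Rq Hq]
    (ιR : R →+* Rq) (ι : H →+* Hq) (ιι : H ⊗[R] H →+* Hq ⊗[Rq] Hq)
    (halg : ∀ r : R, ι (algebraMap R H r) = algebraMap Rq Hq (ιR r))
    (hιι : ∀ h k : H, ιι (h ⊗ₜ[R] k) = ι h ⊗ₜ[Rq] ι k)
    (hιε : ∀ h : H, Coalgebra.counit (R := Rq) (ι h) = ιR (Coalgebra.counit (R := R) h))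
    (hιΔ : ∀ h : H, Coalgebra.comul (R := Rq) (ι h) = ιι (Coalgebra.comul (R := R) h))
    (F : MvPowerSeries (Fin 2) (H ⊗[R] H)) (hF : IsCommFormalGroup R H F)
    (Fq : MvPowerSeries (Fin 2) (Hq ⊗[Rq] Hq)) (hFq : Fq = mapCoeffs (⇑ιι) F)
    (w : PowerSeries Hq)
    (hw : w = PowerSeries.mk fun n =>
      idCounit Rq Hq (Fq (Finsupp.single 0 n + Finsupp.single 1 1)))
    (hb0 : IsUnit (idCounit Rq Hq (Fq (Finsupp.single 1 1))))
    (winv : PowerSeries Hq) (hwinv : winv * w = 1)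
    (g : PowerSeries Hq)
    (hg : g = PowerSeries.mk fun n =>
      if n = 0 then 0 else ((n : ℚ)⁻¹) • PowerSeries.coeff (R := Hq) (n - 1) winv)
    (c : Hq ⊗[Rq] Hq)
    (hc₁ : idCounit Rq Hq c = 0) (hc₂ : counitId Rq Hq c = 0)
    (heq : subst1 (mapCoeffs (⇑(Coalgebra.comul (R := Rq) (A := Hq))) g) Fq =
      MvPowerSeries.C (σ := Fin 2) (R := Hq ⊗[Rq] Hq) c
        + inVar0 (fun b => b ⊗ₜ[Rq] (1 : Hq)) g
        + inVar1 (fun b => (1 : Hq) ⊗ₜ[Rq] b) g)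
    (Garg : MvPowerSeries (Fin 2) (Hq ⊗[Rq] Hq))
    (hGarg : Garg = MvPowerSeries.C (σ := Fin 2) (R := Hq ⊗[Rq] Hq) c
        + inVar0 (fun b => b ⊗ₜ[Rq] (1 : Hq)) g
        + inVar1 (fun b => (1 : Hq) ⊗ₜ[Rq] b) g)
    (εε : Hq ⊗[Rq] Hq →ₐ[Rq] Rq)
    (hεε : εε = (Algebra.TensorProduct.lmul' Rq).comp
      (Algebra.TensorProduct.map (Bialgebra.counitAlgHom Rq Hq)
        (Bialgebra.counitAlgHom Rq Hq))) :
    ∃ ginv : PowerSeries Hq,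
      PowerSeries.coeff (R := Hq) 0 ginv = 0 ∧
      subst1 g ginv = (PowerSeries.X : PowerSeries Hq) ∧
      subst1 ginv g = (PowerSeries.X : PowerSeries Hq) ∧
      ∀ (k : ℕ) (m : Fin 2 →₀ ℕ),
        MvPowerSeries.coeff (R := Hq ⊗[Rq] Hq) m Fq -
          ∑ n ∈ Finset.range (k + m 0 + m 1 + 1),
            PowerSeries.coeff (R := Hq ⊗[Rq] Hq) n
              (mapCoeffs (⇑(Coalgebra.comul (R := Rq) (A := Hq))) ginv) *
              MvPowerSeries.coeff (R := Hq ⊗[Rq] Hq) m (Garg ^ n)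
          ∈ RingHom.ker εε.toRingHom ^ k :=
  stmt10_general R H Rq Hq ιι F hF Fq hFq w winv hwinv g hg c heq Garg hGarg εε

end FGHopf
end
end
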